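/- arXiv:1010.6059 — 2 statements merged into one kernel-verified Lean document; each statement's English description precedes it below -/
import Mathlib

section
/- Let q be a prime power, m an odd prime, 𝔽_{q^m} the field with q^m elements, and Φσ(x₁, …, x_m) = (x_m^q, x₁^q, …, x_{m−1}^q) on (𝔽_{q^m}^×)^m. Let n : (𝔽_{q^m}^×)^m → 𝔽_{q^m}^× be n(x₁, …, x_m) = x₁ x₂^{q^{m−1}} x₃^{q^{m−2}} ⋯ x_m^{q}. Then the map sending a group homomorphism Λ' : 𝔽_{q^m}^× → ℂ^× to Λ' ∘ n is a bijection from the set of all group homomorphisms 𝔽_{q^m}^× → ℂ^× onto the set of group homomorphisms Λ : (𝔽_{q^m}^×)^m → ℂ^× with Λ ∘ Φσ = Λ. -/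
section aux

variable {q m : ℕ} {F : Type} [Field F] [Fintype F]

/-- In `Fˣ` with `|F| = q^m`, raising to the `q^m` power is the identity. -/
lemma aux_pow_qm (hq0 : 0 < q ^ m) (hF : Fintype.card F = q ^ m) (y : Fˣ) :
    y ^ q ^ m = y := by
  classical
  have hcard : Fintype.card Fˣ = q ^ m - 1 := by
    rw [Fintype.card_units, hF]
  have h1 : y ^ (q ^ m - 1) = 1 := by
    rw [← hcard]; exact pow_card_eq_one
  calc y ^ q ^ m = y ^ (q ^ m - 1 + 1) := by congr 1; omega
    _ = y ^ (q ^ m - 1) * y := by rw [pow_succ]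
    _ = y := by rw [h1, one_mul]

/-- `y ^ q^a` only depends on `a` modulo `m`. -/
lemma aux_pow_mod (hq0 : 0 < q ^ m) (hF : Fintype.card F = q ^ m) (y : Fˣ)
    {a b : ℕ} (h : a % m = b % m) : y ^ q ^ a = y ^ q ^ b := by
  have key : ∀ k r : ℕ, y ^ q ^ (m * k + r) = y ^ q ^ r := by
    intro k
    induction k with
    | zero => simp
    | succ k ih =>
      intro r
      have h2 : m * (k + 1) + r = m + (m * k + r) := by ring
      rw [h2, pow_add, pow_mul, aux_pow_qm hq0 hF, ih]
  have h1 : ∀ c : ℕ, y ^ q ^ c = y ^ q ^ (c % m) := by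
    intro c
    conv_lhs => rw [← Nat.div_add_mod c m]
    exact key _ _
  rw [h1 a, h1 b, h]

end aux

open Fin.NatCast

/-- Precomposition with `n(x₁,…,x_m) = x₁ x₂^{q^{m−1}} x₃^{q^{m−2}} ⋯ x_m^q` is
a bijection from the characters of `𝔽_{q^m}^×` onto the characters of
`(𝔽_{q^m}^×)^m` that are equivariant for the twisted Frobenius
`Φσ(x₁,…,x_m) = (x_m^q, x₁^q, …, x_{m−1}^q)`. -/
theorem stmt5 (q m : ℕ) (hq : IsPrimePow q) (hm : m.Prime) (hmo : Odd m)
    [NeZero m] (F : Type) [Field F] [Fintype F] (hF : Fintype.card F = q ^ m) :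
    ∃ n : (Fin m → Fˣ) →* Fˣ,
      (∀ x : Fin m → Fˣ, n x = ∏ j : Fin m, x j ^ q ^ ((m - (j : ℕ)) % m)) ∧
      Function.Injective (fun Λ' : Fˣ →* ℂˣ => Λ'.comp n) ∧
      Set.range (fun Λ' : Fˣ →* ℂˣ => Λ'.comp n)
        = {Λ : (Fin m → Fˣ) →* ℂˣ |
            ∀ x : Fin m → Fˣ, Λ (fun i => x (i - 1) ^ q) = Λ x} := by
  classical
  have hm2 : 2 ≤ m := hm.two_le
  have hq0 : 0 < q ^ m := by rw [← hF]; exact Fintype.card_pos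
  set n : (Fin m → Fˣ) →* Fˣ :=
    { toFun := fun x => ∏ j : Fin m, x j ^ q ^ ((m - (j : ℕ)) % m)
      map_one' := by simp
      map_mul' := by intro x y; simp [mul_pow, Finset.prod_mul_distrib] } with hn_def
  have hn : ∀ x : Fin m → Fˣ, n x = ∏ j : Fin m, x j ^ q ^ ((m - (j : ℕ)) % m) :=
    fun _ => rfl
  -- `n` has a section : n (mulSingle 0 y) = y
  have hsec : ∀ y : Fˣ, n ((Pi.mulSingle 0 y : Fin m → Fˣ)) = y := by
    intro y
    rw [hn, Fintype.prod_eq_single 0 (fun j hj => by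
      rw [Pi.mulSingle_eq_of_ne hj, one_pow])]
    simp
  -- injectivity
  have hinj : Function.Injective (fun Λ' : Fˣ →* ℂˣ => Λ'.comp n) := by
    intro Λ₁ Λ₂ h
    refine MonoidHom.ext fun y => ?_
    have h2 := congrArg (fun f : (Fin m → Fˣ) →* ℂˣ => f ((Pi.mulSingle 0 y : Fin m → Fˣ))) h
    simpa [hsec y] using h2
  -- exponent congruence used for equivariance of n
  have hexp : ∀ i : Fin m,
      ((m - ((i + 1 : Fin m) : ℕ)) % m + 1) % m = ((m - (i : ℕ)) % m) % m := by
    intro i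
    have hv : ((i + 1 : Fin m) : ℕ) = ((i : ℕ) + 1) % m := by
      rw [Fin.val_add]
      congr 1
      congr 1
      exact Fin.val_one' m ▸ (Nat.mod_eq_of_lt hm2).symm ▸ rfl
    have hi := i.isLt
    by_cases hc : (i : ℕ) + 1 = m
    · have h0 : ((i + 1 : Fin m) : ℕ) = 0 := by rw [hv, hc, Nat.mod_self]
      rw [h0, Nat.sub_zero, Nat.mod_self]
      have h1 : m - (i : ℕ) = 1 := by omega
      rw [h1, Nat.mod_mod_of_dvd _ dvd_rfl]
    · have hlt : (i : ℕ) + 1 < m := by omega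
      have h0 : ((i + 1 : Fin m) : ℕ) = (i : ℕ) + 1 := by
        rw [hv, Nat.mod_eq_of_lt hlt]
      rw [h0]
      have h2 : m - ((i : ℕ) + 1) < m := by omega
      rw [Nat.mod_eq_of_lt h2]
      have h3 : m - ((i : ℕ) + 1) + 1 = m - (i : ℕ) := by omega
      rw [h3, Nat.mod_mod_of_dvd _ dvd_rfl]
  -- n is Φσ-equivariant
  have hnequiv : ∀ x : Fin m → Fˣ, n (fun i => x (i - 1) ^ q) = n x := by
    intro x
    rw [hn, hn]
    have step1 : ∀ j : Fin m,
        (x (j - 1) ^ q) ^ q ^ ((m - (j : ℕ)) % m)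
          = x (j - 1) ^ q ^ ((m - (j : ℕ)) % m + 1) := by
      intro j
      rw [← pow_mul, ← pow_succ']
    simp_rw [step1]
    rw [← Equiv.prod_comp (Equiv.addRight (1 : Fin m))
      (fun j : Fin m => x (j - 1) ^ q ^ ((m - (j : ℕ)) % m + 1))]
    refine Finset.prod_congr rfl fun i _ => ?_
    simp only [Equiv.coe_addRight, add_sub_cancel_right]
    exact aux_pow_mod hq0 hF _ (hexp i)
  -- one Frobenius step on a single-coordinate element
  have hstep : ∀ (Λ : (Fin m → Fˣ) →* ℂˣ),
      (∀ x : Fin m → Fˣ, Λ (fun i => x (i - 1) ^ q) = Λ x) →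
      ∀ (j : Fin m) (y : Fˣ),
        Λ ((Pi.mulSingle (j + 1) (y ^ q) : Fin m → Fˣ)) = Λ ((Pi.mulSingle j y : Fin m → Fˣ)) := by
    intro Λ hΛ j y
    have hx : (fun i : Fin m => (Pi.mulSingle j y : Fin m → Fˣ) (i - 1) ^ q)
        = (Pi.mulSingle (j + 1) (y ^ q) : Fin m → Fˣ) := by
      funext i
      rcases eq_or_ne i (j + 1) with h | h
      · subst h; rw [add_sub_cancel_right]; simp
      · have h' : i - 1 ≠ j := by
          intro hh
          exact h (by rw [← hh, sub_add_cancel])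
        rw [Pi.mulSingle_eq_of_ne h', Pi.mulSingle_eq_of_ne h, one_pow]
    rw [← hx, hΛ]
  -- iterate the step
  have hiter : ∀ (Λ : (Fin m → Fˣ) →* ℂˣ),
      (∀ x : Fin m → Fˣ, Λ (fun i => x (i - 1) ^ q) = Λ x) →
      ∀ (k : ℕ) (j : Fin m) (y : Fˣ),
        Λ ((Pi.mulSingle (j + (k : Fin m)) (y ^ q ^ k) : Fin m → Fˣ)) = Λ ((Pi.mulSingle j y : Fin m → Fˣ)) := by
    intro Λ hΛ k
    induction k with
    | zero => intro j y; simp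
    | succ k ih =>
      intro j y
      have hc : ((k + 1 : ℕ) : Fin m) = (k : Fin m) + 1 := by push_cast; ring
      have hp : y ^ q ^ (k + 1) = (y ^ q ^ k) ^ q := by
        rw [← pow_mul, ← pow_succ]
      rw [hc, hp, ← add_assoc, hstep Λ hΛ (j + (k : Fin m)) (y ^ q ^ k), ih]
  -- move a single coordinate to position 0
  have hsingle0 : ∀ (Λ : (Fin m → Fˣ) →* ℂˣ),
      (∀ x : Fin m → Fˣ, Λ (fun i => x (i - 1) ^ q) = Λ x) →
      ∀ (j : Fin m) (y : Fˣ),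
        Λ ((Pi.mulSingle j y : Fin m → Fˣ)) = Λ ((Pi.mulSingle 0 (y ^ q ^ ((m - (j : ℕ)) % m)) : Fin m → Fˣ)) := by
    intro Λ hΛ j y
    have h1 := hiter Λ hΛ (m - (j : ℕ)) j y
    have h2 : j + ((m - (j : ℕ) : ℕ) : Fin m) = 0 := by
      have hj := j.isLt
      apply Fin.ext
      rw [Fin.val_add, Fin.val_natCast, Fin.val_zero,
        Nat.add_mod, Nat.mod_mod_of_dvd _ dvd_rfl, ← Nat.add_mod]
      have h3 : (j : ℕ) + (m - (j : ℕ)) = m := by omega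
      rw [h3, Nat.mod_self]
    rw [h2] at h1
    have h4 : y ^ q ^ (m - (j : ℕ)) = y ^ q ^ ((m - (j : ℕ)) % m) :=
      aux_pow_mod hq0 hF y (Nat.mod_mod_of_dvd _ dvd_rfl).symm
    rw [h4] at h1
    exact h1.symm
  refine ⟨n, hn, hinj, ?_⟩
  ext Λ
  constructor
  · rintro ⟨Λ', rfl⟩ x
    simp only [MonoidHom.comp_apply]
    rw [hnequiv x]
  · intro hΛ
    refine ⟨Λ.comp (MonoidHom.mulSingle (I := Fin m) (fun _ => Fˣ) 0), ?_⟩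
    refine MonoidHom.ext fun x => ?_
    simp only [MonoidHom.comp_apply]
    have hms : ∀ z : Fˣ, MonoidHom.mulSingle (I := Fin m) (fun _ => Fˣ) 0 z
        = (Pi.mulSingle 0 z : Fin m → Fˣ) := fun _ => rfl
    calc Λ (MonoidHom.mulSingle (I := Fin m) (fun _ => Fˣ) 0 (n x))
        = Λ ((Pi.mulSingle 0 (∏ j : Fin m, x j ^ q ^ ((m - (j : ℕ)) % m)) : Fin m → Fˣ)) := by
          rw [hms, hn]
      _ = Λ (∏ j : Fin m, (Pi.mulSingle (0 : Fin m)
            (x j ^ q ^ ((m - (j : ℕ)) % m)) : Fin m → Fˣ)) := by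
          exact congrArg Λ (map_prod (MonoidHom.mulSingle (I := Fin m) (fun _ => Fˣ) 0)
            (fun j => x j ^ q ^ ((m - (j : ℕ)) % m)) Finset.univ)
      _ = ∏ j : Fin m, Λ ((Pi.mulSingle (0 : Fin m)
            (x j ^ q ^ ((m - (j : ℕ)) % m)) : Fin m → Fˣ)) := by rw [map_prod]
      _ = ∏ j : Fin m, Λ ((Pi.mulSingle j (x j) : Fin m → Fˣ)) := by
          refine Finset.prod_congr rfl fun j _ => (hsingle0 Λ hΛ j (x j)).symm
      _ = Λ (∏ j : Fin m, (Pi.mulSingle j (x j) : Fin m → Fˣ)) := by rw [map_prod]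
      _ = Λ x := by rw [Finset.univ_prod_mulSingle]
end

section
/- Let R be a local ring whose residue field has characteristic p, and let m be a positive integer not divisible by p. If ζ₁ and ζ₂ are distinct elements of R with ζ₁^m = 1 and ζ₂^m = 1, then ζ₁ − ζ₂ is a unit of R. -/
/-- In a local ring whose residue field has characteristic `p`, two distinct
`m`-th roots of unity (with `p ∤ m`, `0 < m`) differ by a unit. -/
theorem stmt8 (R : Type) [CommRing R] [IsLocalRing R] (p m : ℕ)
    [CharP (IsLocalRing.ResidueField R) p] (hm : 0 < m) (hpm : ¬ p ∣ m)
    (ζ₁ ζ₂ : R) (h₁ : ζ₁ ^ m = 1) (h₂ : ζ₂ ^ m = 1) (hne : ζ₁ ≠ ζ₂) :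
    IsUnit (ζ₁ - ζ₂) := by
  by_contra hnu
  set φ := IsLocalRing.residue R
  have hmem : ζ₁ - ζ₂ ∈ IsLocalRing.maximalIdeal R := hnu
  have hres : φ ζ₁ = φ ζ₂ := by
    have : φ (ζ₁ - ζ₂) = 0 := Ideal.Quotient.eq_zero_iff_mem.mpr hmem
    rw [map_sub, sub_eq_zero] at this
    exact this
  set s : R := ∑ i ∈ Finset.range m, ζ₁ ^ i * ζ₂ ^ (m - 1 - i) with hs
  have hkey : s * (ζ₁ - ζ₂) = 0 := by
    rw [hs, geom_sum₂_mul, h₁, h₂, sub_self]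
  have hφs : φ s = m * (φ ζ₂) ^ (m - 1) := by
    rw [hs, map_sum]
    rw [Finset.sum_congr rfl (fun i hi => ?_), Finset.sum_const, Finset.card_range,
      nsmul_eq_mul]
    rw [map_mul, map_pow, map_pow, hres, ← pow_add]
    congr 1
    have := Finset.mem_range.mp hi
    omega
  have hζ₂ : φ ζ₂ ≠ 0 := by
    intro h0
    have : (φ ζ₂) ^ m = 1 := by rw [← map_pow, h₂, map_one]
    rw [h0, zero_pow hm.ne'] at this
    exact zero_ne_one this
  have hmne : (m : IsLocalRing.ResidueField R) ≠ 0 := by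
    rw [Ne, CharP.cast_eq_zero_iff _ p]
    exact hpm
  have hφsne : φ s ≠ 0 := by
    rw [hφs]
    exact mul_ne_zero hmne (pow_ne_zero _ hζ₂)
  have hsu : IsUnit s := by
    by_contra hsn
    exact hφsne (Ideal.Quotient.eq_zero_iff_mem.mpr hsn)
  have := hsu.mul_right_eq_zero.mp hkey
  exact hne (sub_eq_zero.mp this)
end
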